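/- arXiv:2409.12243 — 5 statements merged into one kernel-verified Lean document; each statement's English description precedes it below -/
import Mathlib

section
/- Under assumptions (A1)–(A3) and the inconsistent optimization assumption (A5) that the fᵢ share no common critical point, the sets L and R satisfy ∂L ∩ ∂R = ∅ and L ∪ R = ℝ. -/
theorem stmt_3 (n : ℕ) (f : Fin n → ℝ → ℝ)
    (hC1 : ∀ i, ContDiff ℝ 1 (f i))
    (hfin : ∀ i, {x : ℝ | deriv (f i) x = 0}.Finite)
    (hcoercive : ∀ i, Filter.Tendsto (f i) (Filter.cocompact ℝ) Filter.atTop)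
    (hA5 : ∀ x : ℝ, ∃ i, deriv (f i) x ≠ 0)
    (L R : Set ℝ)
    (hL : L = ⋃ i, {x : ℝ | deriv (f i) x > 0})
    (hR : R = ⋃ i, {x : ℝ | deriv (f i) x < 0}) :
    frontier L ∩ frontier R = ∅ ∧ L ∪ R = Set.univ := by
  have hcont : ∀ i, Continuous (deriv (f i)) := fun i =>
    (hC1 i).continuous_deriv le_rfl
  have hLopen : IsOpen L := by
    rw [hL]
    exact isOpen_iUnion fun i => isOpen_lt continuous_const (hcont i)
  have hRopen : IsOpen R := by
    rw [hR]
    exact isOpen_iUnion fun i => isOpen_lt (hcont i) continuous_const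
  have hcover : L ∪ R = Set.univ := by
    ext x
    simp only [Set.mem_univ, iff_true, hL, hR, Set.mem_union, Set.mem_iUnion,
      Set.mem_setOf_eq]
    obtain ⟨i, hi⟩ := hA5 x
    rcases hi.lt_or_gt with h | h
    · exact Or.inr ⟨i, h⟩
    · exact Or.inl ⟨i, h⟩
  refine ⟨?_, hcover⟩
  have h1 : frontier L ⊆ Lᶜ := by
    rw [hLopen.frontier_eq]
    exact Set.diff_subset_compl _ _
  have h2 : frontier R ⊆ Rᶜ := by
    rw [hRopen.frontier_eq]
    exact Set.diff_subset_compl _ _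
  have : frontier L ∩ frontier R ⊆ Lᶜ ∩ Rᶜ := Set.inter_subset_inter h1 h2
  rw [← Set.compl_union, hcover, Set.compl_univ] at this
  exact Set.subset_empty_iff.mp this
end

section
/- Under assumptions (A1)–(A5), there exists at least one closed interval T = [l,r] with l < r such that (l,r) ⊆ L ∩ R, l ∈ ∂L, and r ∈ ∂R. -/
open Filter Set

private lemma deriv_pos_of_gt {g : ℝ → ℝ} {b : ℝ} (hg : ContDiff ℝ 1 g)
    (hco : Tendsto g (cocompact ℝ) atTop)
    (hcrit : ∀ x : ℝ, deriv g x = 0 → x ≤ b) :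
    ∀ x : ℝ, b < x → 0 < deriv g x := by
  have hdc : Continuous (deriv g) := hg.continuous_deriv le_rfl
  by_contra h
  push_neg at h
  obtain ⟨x, hbx, hx⟩ := h
  have hxneg : deriv g x < 0 :=
    lt_of_le_of_ne hx (fun h0 => absurd (hcrit x h0) (not_le.mpr hbx))
  have hall : ∀ y ∈ interior (Ici x), deriv g y < 0 := by
    intro y hy
    rw [interior_Ici] at hy
    rcases lt_or_ge (deriv g y) 0 with h' | h'
    · exact h'
    · exfalso
      obtain ⟨c, hc, hc0⟩ := intermediate_value_Icc (le_of_lt hy) hdc.continuousOn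
        (show (0:ℝ) ∈ Icc (deriv g x) (deriv g y) from ⟨le_of_lt hxneg, h'⟩)
      exact absurd (hcrit c hc0) (not_le.mpr (lt_of_lt_of_le hbx hc.1))
  have hanti : StrictAntiOn g (Ici x) :=
    strictAntiOn_of_deriv_neg (convex_Ici x) hg.continuous.continuousOn hall
  have htop : Tendsto g atTop atTop := hco.mono_left atTop_le_cocompact
  obtain ⟨T, hT⟩ := (htop.eventually_ge_atTop (g x + 1)).exists_forall_of_atTop
  set t := max T (x + 1) with ht
  have h1 : g x + 1 ≤ g t := hT t (le_max_left _ _)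
  have h2 : g t < g x :=
    hanti (le_refl x) (le_of_lt (lt_of_lt_of_le (lt_add_one x) (le_max_right _ _)))
      (lt_of_lt_of_le (lt_add_one x) (le_max_right _ _))
  linarith

private lemma deriv_neg_of_lt {g : ℝ → ℝ} {a : ℝ} (hg : ContDiff ℝ 1 g)
    (hco : Tendsto g (cocompact ℝ) atTop)
    (hcrit : ∀ x : ℝ, deriv g x = 0 → a ≤ x) :
    ∀ x : ℝ, x < a → deriv g x < 0 := by
  have hdc : Continuous (deriv g) := hg.continuous_deriv le_rfl
  by_contra h
  push_neg at h
  obtain ⟨x, hbx, hx⟩ := h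
  have hxpos : 0 < deriv g x :=
    lt_of_le_of_ne hx (fun h0 => absurd (hcrit x h0.symm) (not_le.mpr hbx))
  have hall : ∀ y ∈ interior (Iic x), 0 < deriv g y := by
    intro y hy
    rw [interior_Iic] at hy
    rcases lt_or_ge 0 (deriv g y) with h' | h'
    · exact h'
    · exfalso
      obtain ⟨c, hc, hc0⟩ := intermediate_value_Icc (le_of_lt hy) hdc.continuousOn
        (show (0:ℝ) ∈ Icc (deriv g y) (deriv g x) from ⟨h', le_of_lt hxpos⟩)
      exact absurd (hcrit c hc0) (not_le.mpr (lt_of_le_of_lt hc.2 hbx))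
  have hmono : StrictMonoOn g (Iic x) :=
    strictMonoOn_of_deriv_pos (convex_Iic x) hg.continuous.continuousOn hall
  have hbot : Tendsto g atBot atTop := hco.mono_left atBot_le_cocompact
  obtain ⟨T, hT⟩ := (hbot.eventually (eventually_ge_atTop (g x + 1))).exists_forall_of_atBot
  set t := min T (x - 1) with ht
  have h1 : g x + 1 ≤ g t := hT t (min_le_left _ _)
  have h2 : g t < g x := by
    have htx : t < x := lt_of_le_of_lt (min_le_right _ _) (by linarith)
    exact hmono (le_of_lt htx) (le_refl x) htx
  linarith

theorem stmt_4 (n : ℕ) (f : Fin n → ℝ → ℝ)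
    (hC1 : ∀ i, ContDiff ℝ 1 (f i))
    (hfin : ∀ i, {x : ℝ | deriv (f i) x = 0}.Finite)
    (hne : ∀ i, {x : ℝ | deriv (f i) x = 0}.Nonempty)
    (hcoercive : ∀ i, Filter.Tendsto (f i) (Filter.cocompact ℝ) Filter.atTop)
    (a b : ℝ)
    (hhull : ∀ i, {x : ℝ | deriv (f i) x = 0} ⊆ Set.Icc a b)
    (K : ℝ) (hK : 0 < K)
    (hLip : ∀ i, ∀ x ∈ Set.Icc a b, ∀ y ∈ Set.Icc a b,
      |deriv (f i) x - deriv (f i) y| ≤ K * |x - y|)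
    (hA5 : ∀ x : ℝ, ∃ i, deriv (f i) x ≠ 0)
    (L R : Set ℝ)
    (hL : L = ⋃ i, {x : ℝ | deriv (f i) x > 0})
    (hR : R = ⋃ i, {x : ℝ | deriv (f i) x < 0}) :
    ∃ l r : ℝ, l < r ∧ Set.Ioo l r ⊆ L ∩ R ∧ l ∈ frontier L ∧ r ∈ frontier R := by
  obtain ⟨i0, _⟩ := hA5 0
  have hcont : ∀ i, Continuous (deriv (f i)) := fun i => (hC1 i).continuous_deriv le_rfl
  have hright : ∀ i, ∀ x : ℝ, b < x → 0 < deriv (f i) x := fun i =>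
    deriv_pos_of_gt (hC1 i) (hcoercive i) (fun x hx => (hhull i hx).2)
  have hleft : ∀ i, ∀ x : ℝ, x < a → deriv (f i) x < 0 := fun i =>
    deriv_neg_of_lt (hC1 i) (hcoercive i) (fun x hx => (hhull i hx).1)
  -- membership characterizations
  have hmemL : ∀ x : ℝ, x ∈ L ↔ ∃ i, 0 < deriv (f i) x := by
    intro x; rw [hL]; simp [mem_iUnion]
  have hmemR : ∀ x : ℝ, x ∈ R ↔ ∃ i, deriv (f i) x < 0 := by
    intro x; rw [hR]; simp [mem_iUnion]
  have hLopen : IsOpen L := by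
    rw [hL]; exact isOpen_iUnion fun i => isOpen_lt continuous_const (hcont i)
  have hRopen : IsOpen R := by
    rw [hR]; exact isOpen_iUnion fun i => isOpen_lt (hcont i) continuous_const
  -- the set Rc of points where all derivatives are nonnegative
  set Rc : Set ℝ := ⋂ i, {x : ℝ | 0 ≤ deriv (f i) x} with hRc
  have hRcClosed : IsClosed Rc :=
    isClosed_iInter fun i => isClosed_le continuous_const (hcont i)
  have hRcNe : Rc.Nonempty :=
    ⟨b + 1, mem_iInter.2 fun i => le_of_lt (hright i (b + 1) (lt_add_one b))⟩
  have hRcBdd : BddBelow Rc := by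
    refine ⟨a, fun x hx => ?_⟩
    by_contra hax
    exact absurd (mem_iInter.1 hx i0) (not_le.mpr (hleft i0 x (not_le.1 hax)))
  set r := sInf Rc with hrdef
  have hrRc : r ∈ Rc := hRcClosed.csInf_mem hRcNe hRcBdd
  have har : a ≤ r := le_csInf hRcNe (fun x hx => by
    by_contra hax
    exact absurd (mem_iInter.1 hx i0) (not_le.mpr (hleft i0 x (not_le.1 hax))))
  have hIioR : ∀ x : ℝ, x < r → x ∈ R := by
    intro x hx
    have : x ∉ Rc := fun hmem => absurd (csInf_le hRcBdd hmem) (not_le.mpr hx)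
    rw [mem_iInter] at this
    push_neg at this
    obtain ⟨i, hi⟩ := this
    exact (hmemR x).2 ⟨i, not_le.1 hi⟩
  -- the set S
  set S : Set ℝ := {x : ℝ | (∀ i, deriv (f i) x ≤ 0) ∧ x < r} with hSdef
  have hSne : S.Nonempty :=
    ⟨a - 1, fun i => le_of_lt (hleft i (a - 1) (by linarith)), by linarith⟩
  have hSBdd : BddAbove S := ⟨r, fun x hx => le_of_lt hx.2⟩
  set l := sSup S with hldef
  have hlr : l ≤ r := csSup_le hSne fun x hx => le_of_lt hx.2
  have hlC : ∀ i, deriv (f i) l ≤ 0 := by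
    have hcl : l ∈ closure S := csSup_mem_closure hSne hSBdd
    have hsub : closure S ⊆ {x : ℝ | ∀ i, deriv (f i) x ≤ 0} := by
      refine closure_minimal (fun x hx => hx.1) ?_
      have : {x : ℝ | ∀ i, deriv (f i) x ≤ 0} = ⋂ i, {x : ℝ | deriv (f i) x ≤ 0} := by
        ext x; simp [mem_iInter]
      rw [this]
      exact isClosed_iInter fun i => isClosed_le (hcont i) continuous_const
    exact hsub hcl
  have hlltr : l < r := by
    rcases lt_or_eq_of_le hlr with h | h
    · exact h
    · exfalso
      obtain ⟨j, hj⟩ := hA5 r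
      have h1 : deriv (f j) r ≤ 0 := h ▸ hlC j
      have h2 : 0 ≤ deriv (f j) r := mem_iInter.1 hrRc j
      exact hj (le_antisymm h1 h2)
  have hIooL : Set.Ioo l r ⊆ L := by
    intro x hx
    by_contra hxL
    have hxS : x ∈ S := by
      refine ⟨fun i => ?_, hx.2⟩
      by_contra hpos
      exact hxL ((hmemL x).2 ⟨i, not_le.1 hpos⟩)
    exact absurd (le_csSup hSBdd hxS) (not_le.mpr hx.1)
  have hIooR : Set.Ioo l r ⊆ R := fun x hx => hIioR x hx.2
  refine ⟨l, r, hlltr, fun x hx => ⟨hIooL hx, hIooR hx⟩, ?_, ?_⟩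
  · rw [hLopen.frontier_eq]
    refine ⟨?_, ?_⟩
    · have : l ∈ closure (Set.Ioo l r) := by
        rw [closure_Ioo (ne_of_lt hlltr)]; exact ⟨le_refl l, le_of_lt hlltr⟩
      exact closure_mono hIooL this
    · intro hlL
      obtain ⟨i, hi⟩ := (hmemL l).1 hlL
      exact absurd (hlC i) (not_le.mpr hi)
  · rw [hRopen.frontier_eq]
    refine ⟨?_, ?_⟩
    · have : r ∈ closure (Set.Ioo l r) := by
        rw [closure_Ioo (ne_of_lt hlltr)]; exact ⟨le_of_lt hlltr, le_refl r⟩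
      exact closure_mono hIooR this
    · intro hrR
      obtain ⟨i, hi⟩ := (hmemR r).1 hrR
      exact absurd (mem_iInter.1 hrRc i) (not_le.mpr hi)
end

section
/- Any two distinct intervals T₁ = [l₁,r₁] and T₂ = [l₂,r₂] satisfying the conditions (lᵢ,rᵢ) ⊆ L ∩ R, lᵢ ∈ ∂L ∖ L, rᵢ ∈ ∂R ∖ R (with L, R open and L ∪ R = ℝ) are disjoint. -/
theorem stmt_7 (L R : Set ℝ) (hLopen : IsOpen L) (hRopen : IsOpen R)
    (hcover : L ∪ R = Set.univ)
    (l₁ r₁ l₂ r₂ : ℝ) (h₁ : l₁ < r₁) (h₂ : l₂ < r₂)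
    (hT₁ : Set.Ioo l₁ r₁ ⊆ L ∩ R) (hT₂ : Set.Ioo l₂ r₂ ⊆ L ∩ R)
    (hl₁ : l₁ ∈ frontier L) (hr₁ : r₁ ∈ frontier R)
    (hl₂ : l₂ ∈ frontier L) (hr₂ : r₂ ∈ frontier R)
    (hl₁' : l₁ ∉ L) (hr₁' : r₁ ∉ R) (hl₂' : l₂ ∉ L) (hr₂' : r₂ ∉ R)
    (hne : Set.Icc l₁ r₁ ≠ Set.Icc l₂ r₂) :
    Disjoint (Set.Icc l₁ r₁) (Set.Icc l₂ r₂) := by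
  -- endpoint nonmemberships in the open intervals
  have A1 : ¬ (l₁ < l₂ ∧ l₂ < r₁) := fun h => hl₂' (hT₁ ⟨h.1, h.2⟩).1
  have A2 : ¬ (l₁ < r₂ ∧ r₂ < r₁) := fun h => hr₂' (hT₁ ⟨h.1, h.2⟩).2
  have A3 : ¬ (l₂ < l₁ ∧ l₁ < r₂) := fun h => hl₁' (hT₂ ⟨h.1, h.2⟩).1
  have A4 : ¬ (l₂ < r₁ ∧ r₁ < r₂) := fun h => hr₁' (hT₂ ⟨h.1, h.2⟩).2
  have cov : ∀ x : ℝ, x ∈ L ∨ x ∈ R := by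
    intro x
    have : x ∈ L ∪ R := hcover.symm ▸ Set.mem_univ x
    exact this
  have B1 : r₁ ≠ l₂ := by
    intro h
    rcases cov r₁ with hx | hx
    · exact hl₂' (h ▸ hx)
    · exact hr₁' hx
  have B2 : r₂ ≠ l₁ := by
    intro h
    rcases cov r₂ with hx | hx
    · exact hl₁' (h ▸ hx)
    · exact hr₂' hx
  have hne' : ¬ (l₁ = l₂ ∧ r₁ = r₂) := by
    intro ⟨e1, e2⟩; exact hne (by rw [e1, e2])
  -- show strict separation
  have sep : r₁ < l₂ ∨ r₂ < l₁ := by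
    by_contra h
    push_neg at h
    obtain ⟨hle1, hle2⟩ := h
    push_neg at A1 A2 A3 A4 hne'
    rcases lt_trichotomy l₁ l₂ with hl | hl | hl
    · exact B1 (le_antisymm (A1 hl) hle1)
    · rcases lt_trichotomy r₁ r₂ with hr | hr | hr
      · linarith [A4 (hl ▸ h₁)]
      · exact hne' hl hr
      · linarith [A2 (hl ▸ h₂)]
    · exact B2 (le_antisymm (A3 hl) hle2)
  rcases sep with hs | hs
  · exact Set.disjoint_left.mpr fun x hx hy => absurd (hx.2.trans_lt (hs.trans_le hy.1)) (lt_irrefl x)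
  · exact Set.disjoint_left.mpr fun x hx hy => absurd (hy.2.trans_lt (hs.trans_le hx.1)) (lt_irrefl x)
end

section
/- (Uniformly transient mass estimate) Let I ⊆ ℝ^d be nonempty and φ₁,…,φₙ : I → I maps. Suppose T ⊆ I is positive invariant (φᵢ(T) ⊆ T for all i) and for every x ∈ B := I ∖ T there exists some i with φᵢ(x) ∈ T. Then for the Markov operator (Pμ)(A) = (1/n)∑ᵢ μ(φᵢ⁻¹(A)) and any finite Borel measure μ supported in I, (Pμ)(B) ≤ (1 - 1/n) μ(B). -/
open MeasureTheory
open scoped ENNReal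

theorem stmt_10 (d n : ℕ) (hn : 0 < n)
    (I T : Set (Fin d → ℝ)) (hI : MeasurableSet I) (hIne : I.Nonempty)
    (hT : MeasurableSet T) (hTI : T ⊆ I)
    (φ : Fin n → (Fin d → ℝ) → (Fin d → ℝ))
    (hmeas : ∀ i, Measurable (φ i))
    (hmapsI : ∀ i, Set.MapsTo (φ i) I I)
    (hmapsT : ∀ i, Set.MapsTo (φ i) T T)
    (hB : ∀ x ∈ I \ T, ∃ i, φ i x ∈ T)
    (μ : Measure (Fin d → ℝ)) [IsFiniteMeasure μ] (hsupp : μ Iᶜ = 0) :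
    (n : ℝ≥0∞)⁻¹ * ∑ i, μ (φ i ⁻¹' (I \ T) ∩ I)
      ≤ (1 - (n : ℝ≥0∞)⁻¹) * μ (I \ T) := by
  set B := I \ T with hBdef
  set A : Fin n → Set (Fin d → ℝ) := fun i => φ i ⁻¹' B ∩ I with hAdef
  have hmB : MeasurableSet B := hI.diff hT
  have hmA : ∀ i, MeasurableSet (A i) := fun i => ((hmeas i) hmB).inter hI
  have hAB : ∀ i, A i ⊆ B := by
    intro i x hx
    rcases hx with ⟨hx1, hx2⟩
    exact ⟨hx2, fun hxT => hx1.2 (hmapsT i hxT)⟩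
  have hcover : B ⊆ ⋃ i, B \ A i := by
    intro x hx
    obtain ⟨i, hi⟩ := hB x hx
    exact Set.mem_iUnion.2 ⟨i, hx, fun hxA => hxA.1.2 hi⟩
  have hD : μ B ≤ ∑ i, μ (B \ A i) :=
    (measure_mono hcover).trans (measure_iUnion_fintype_le μ _)
  have hsum : ∀ i, μ (A i) + μ (B \ A i) = μ B := fun i => by
    rw [measure_add_diff (hmA i).nullMeasurableSet, Set.union_eq_right.2 (hAB i)]
  have key : ∑ i, μ (A i) + μ B ≤ (n : ℝ≥0∞) * μ B := by
    calc ∑ i, μ (A i) + μ B ≤ ∑ i, μ (A i) + ∑ i, μ (B \ A i) := add_le_add_right hD _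
      _ = ∑ i, (μ (A i) + μ (B \ A i)) := Finset.sum_add_distrib.symm
      _ = ∑ _i : Fin n, μ B := by simp [hsum]
      _ = (n : ℝ≥0∞) * μ B := by simp [Finset.sum_const, nsmul_eq_mul]
  have hμB : μ B ≠ ∞ := measure_ne_top μ B
  have hn0 : (n : ℝ≥0∞) ≠ 0 := Nat.cast_ne_zero.2 hn.ne'
  have hnt : (n : ℝ≥0∞) ≠ ∞ := ENNReal.natCast_ne_top n
  have hS : ∑ i, μ (A i) ≤ ((n : ℝ≥0∞) - 1) * μ B := by
    rw [ENNReal.sub_mul (fun _ _ => hμB), one_mul]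
    exact ENNReal.le_sub_of_add_le_right hμB key
  calc (n : ℝ≥0∞)⁻¹ * ∑ i, μ (A i)
      ≤ (n : ℝ≥0∞)⁻¹ * (((n : ℝ≥0∞) - 1) * μ B) := mul_le_mul_right hS _
    _ = (1 - (n : ℝ≥0∞)⁻¹) * μ B := by
        rw [← mul_assoc, ENNReal.mul_sub (fun _ _ => ENNReal.inv_ne_top.2 hn0), ENNReal.inv_mul_cancel hn0 hnt,
          mul_one]
end

section
/- Suppose that for every x in a compact set I ⊆ ℝ there exists a finite composition of the continuous maps φ₁,…,φₙ carrying x into the open set U, and that φᵢ(U) ⊆ U for all i. Then there exists a uniform path length ℓ such that for every x ∈ I some composition of exactly ℓ of the maps carries x into U. -/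
private lemma foldl_cont {n : ℕ} (φ : Fin n → ℝ → ℝ) (hcont : ∀ i, Continuous (φ i))
    (p : List (Fin n)) : Continuous (fun x => p.foldl (fun y i => φ i y) x) := by
  induction p with
  | nil => exact continuous_id
  | cons i p ih =>
      exact ih.comp (hcont i)

private lemma foldl_replicate_mem {n : ℕ} (φ : Fin n → ℝ → ℝ) (U : Set ℝ)
    (hmapsU : ∀ i, Set.MapsTo (φ i) U U) (i₀ : Fin n) :
    ∀ k (x : ℝ), x ∈ U → (List.replicate k i₀).foldl (fun y i => φ i y) x ∈ U := by
  intro k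
  induction k with
  | zero => intro x hx; simpa using hx
  | succ k ih =>
      intro x hx
      rw [List.replicate_succ, List.foldl_cons]
      exact ih _ (hmapsU i₀ hx)

theorem stmt_12 (n : ℕ) (I : Set ℝ) (hI : IsCompact I)
    (φ : Fin n → ℝ → ℝ) (hcont : ∀ i, Continuous (φ i))
    (hmapsI : ∀ i, Set.MapsTo (φ i) I I)
    (U : Set ℝ) (hU : IsOpen U)
    (hmapsU : ∀ i, Set.MapsTo (φ i) U U)
    (hreach : ∀ x ∈ I, ∃ p : List (Fin n),
      p.foldl (fun y i => φ i y) x ∈ U) :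
    ∃ ℓ : ℕ, ∀ x ∈ I, ∃ p : List (Fin n),
      p.length = ℓ ∧ p.foldl (fun y i => φ i y) x ∈ U := by
  rcases Nat.eq_zero_or_pos n with hn | hn
  · subst hn
    refine ⟨0, fun x hx => ?_⟩
    obtain ⟨p, hp⟩ := hreach x hx
    cases p with
    | nil => exact ⟨[], rfl, hp⟩
    | cons i _ => exact i.elim0
  · obtain ⟨i₀⟩ : Nonempty (Fin n) := ⟨⟨0, hn⟩⟩
    have hcover : I ⊆ ⋃ p : List (Fin n),
        (fun x => p.foldl (fun y i => φ i y) x) ⁻¹' U := by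
      intro x hx
      obtain ⟨p, hp⟩ := hreach x hx
      exact Set.mem_iUnion.mpr ⟨p, hp⟩
    obtain ⟨t, ht⟩ := hI.elim_finite_subcover _
      (fun p => hU.preimage (foldl_cont φ hcont p)) hcover
    refine ⟨t.sup List.length, fun x hx => ?_⟩
    obtain ⟨p, hpt, hp⟩ := Set.mem_iUnion₂.mp (ht hx)
    refine ⟨p ++ List.replicate (t.sup List.length - p.length) i₀, ?_, ?_⟩
    · have : p.length ≤ t.sup List.length := Finset.le_sup hpt
      simp [List.length_append, List.length_replicate]
      omega
    · rw [List.foldl_append]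
      exact foldl_replicate_mem φ U hmapsU i₀ _ _ hp
end
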